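/- With H, 𝖧, d, N as above and T any unitary on ℂ^{2N} ⊗ ℂ^{2N} satisfying T(|j⟩⊗|0⟩) = |j⟩ ⊗ |ψ_j⟩ for j ∈ [N], where |ψ_j⟩ = (1/√d) ∑_{(j,k)∈𝖧} (√(H_{jk}*)|k⟩ + √(1−|H_{jk}|)|k+N⟩), and S the swap operator, the operator T†ST is a (1, n+2, 0)-block-encoding of H/d; equivalently, (⟨j|⊗⟨0|) T†ST (|l⟩⊗|0⟩) = H_{jl}/d for all j, l ∈ [N]. -/

import Mathlib

open Finset
open scoped Classical

noncomputable section

/-- Embedding of `[N]` into the first half of `[2N]`. -/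
def embA {N : ℕ} (k : Fin N) : Fin (2 * N) := ⟨k, by have := k.isLt; omega⟩

/-- Embedding `k ↦ k + N` of `[N]` into the second half of `[2N]`. -/
def embB {N : ℕ} (k : Fin N) : Fin (2 * N) := ⟨(k : ℕ) + N, by have := k.isLt; omega⟩

/-- The post-transition state
`|ψ_j⟩ = (1/√d) ∑_{(j,k)∈𝖧} (√(H_{jk}*)|k⟩ + √(1−|H_{jk}|)|k+N⟩) ∈ ℂ^{2N}`. -/
def psiState {N : ℕ} (d : ℕ) (H : Matrix (Fin N) (Fin N) ℂ) (sq : ℂ → ℂ) (j : Fin N) :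
    Fin (2 * N) → ℂ := fun p =>
  ((Real.sqrt d : ℂ))⁻¹ * ∑ k : Fin N,
    if H j k ≠ 0 then
      (if p = embA k then sq ((starRingEnd ℂ) (H j k)) else 0) +
      (if p = embB k then (Real.sqrt (1 - ‖H j k‖) : ℂ) else 0)
    else 0

/-- The state `|Ψ_j⟩ = |j⟩ ⊗ |ψ_j⟩ ∈ ℂ^{2N} ⊗ ℂ^{2N}`. -/
def PsiState {N : ℕ} (d : ℕ) (H : Matrix (Fin N) (Fin N) ℂ) (sq : ℂ → ℂ) (j : Fin N) :
    Fin (2 * N) × Fin (2 * N) → ℂ := fun p =>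
  (if p.1 = embA j then 1 else 0) * psiState d H sq j p.2

/-- The swap operator `S|a,b⟩ = |b,a⟩` as a matrix on `ℂ^{2N} ⊗ ℂ^{2N}`. -/
def swapMatrix (N : ℕ) :
    Matrix (Fin (2 * N) × Fin (2 * N)) (Fin (2 * N) × Fin (2 * N)) ℂ :=
  Matrix.of fun p q => if q = (p.2, p.1) then 1 else 0

lemma embA_ne_embB {N : ℕ} (l k : Fin N) : embA l ≠ embB k := by
  intro h
  have h' := congrArg Fin.val h
  have := l.isLt
  simp only [embA, embB] at h'
  omega

lemma psiState_embA {N : ℕ} (d : ℕ) (H : Matrix (Fin N) (Fin N) ℂ) (sq : ℂ → ℂ) (j l : Fin N) :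
    psiState d H sq j (embA l) =
      ((Real.sqrt d : ℂ))⁻¹ * (if H j l ≠ 0 then sq ((starRingEnd ℂ) (H j l)) else 0) := by
  unfold psiState
  congr 1
  rw [Finset.sum_eq_single l]
  · simp [embA_ne_embB]
  · intro k _ hk
    have h1 : embA l ≠ embA k := by
      intro h
      exact hk (Fin.ext (by simpa [embA] using congrArg Fin.val h)).symm
    simp [h1, embA_ne_embB]
  · simp

/-- `T†ST` is a `(1, n+2, 0)`-block-encoding of `H/d`, stated through its matrix elements: for a
`d`-sparse Hermitian `H` on `N = 2^n` dimensions with `‖H‖_max ≤ 1`, a root function `sq` with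
`sq(z*)·(sq z)* = z*` at every entry `z = H_{jk}` (so no entry of `H` is a negative real), and
`T` any unitary with `T(|j⟩⊗|0⟩) = |j⟩⊗|ψ_j⟩`, we have
`(⟨j|⊗⟨0|) T†ST (|l⟩⊗|0⟩) = H_{jl}/d`.  Here `𝖧` is the set of nonzero entries, so for a true
square root such a unitary `T` exists only when every row of `H` has exactly `d` nonzero
entries. -/
theorem TdaggerST_block_encodes (n N d : ℕ) (hN : N = 2 ^ n) (hd : 0 < d)
    (H : Matrix (Fin N) (Fin N) ℂ) (hH : H.IsHermitian)
    (hmax : ∀ j k, ‖H j k‖ ≤ 1)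
    (hsparse : ∀ j, (univ.filter (fun k => H j k ≠ 0)).card ≤ d)
    (sq : ℂ → ℂ)
    (hsq : ∀ j k : Fin N, sq ((starRingEnd ℂ) (H j k)) * (starRingEnd ℂ) (sq (H j k)) =
      (starRingEnd ℂ) (H j k))
    (T : Matrix (Fin (2 * N) × Fin (2 * N)) (Fin (2 * N) × Fin (2 * N)) ℂ)
    (hTuni : T ∈ Matrix.unitaryGroup (Fin (2 * N) × Fin (2 * N)) ℂ)
    (zero2N : Fin (2 * N)) (hzero : (zero2N : ℕ) = 0)
    (hT : ∀ (j : Fin N) (p : Fin (2 * N) × Fin (2 * N)),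
      T p (embA j, zero2N) = PsiState d H sq j p)
    (j l : Fin N) :
    (T.conjTranspose * swapMatrix N * T) (embA j, zero2N) (embA l, zero2N) = H j l / (d : ℂ) := by
  have hSwap : ∀ a q, (T.conjTranspose * swapMatrix N) a q
      = (starRingEnd ℂ) (T (q.2, q.1) a) := by
    intro a q
    rw [Matrix.mul_apply, Finset.sum_eq_single (q.2, q.1)]
    · simp [swapMatrix, Matrix.conjTranspose_apply]
    · intro p _ hp
      have : q ≠ (p.2, p.1) := by
        intro h; subst h; simp at hp
      simp [swapMatrix, this]
    · simp
  rw [Matrix.mul_apply]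
  simp only [hSwap, hT]
  have hmain : ∑ q : Fin (2 * N) × Fin (2 * N),
      (starRingEnd ℂ) (PsiState d H sq j (q.2, q.1)) * PsiState d H sq l q
      = (starRingEnd ℂ) (psiState d H sq j (embA l)) * psiState d H sq l (embA j) := by
    rw [Fintype.sum_prod_type]
    rw [Finset.sum_eq_single (embA l)]
    · rw [Finset.sum_eq_single (embA j)]
      · simp [PsiState]
      · intro b _ hb; simp [PsiState, hb]
      · simp
    · intro a _ ha; simp [PsiState, ha]
    · simp
  rw [hmain, psiState_embA, psiState_embA]
  have hHlj : H l j = (starRingEnd ℂ) (H j l) := by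
    have := congrFun (congrFun hH l) j
    simpa [Matrix.conjTranspose_apply] using this.symm
  have hsqrt : (starRingEnd ℂ) ((Real.sqrt d : ℂ))⁻¹ * ((Real.sqrt d : ℂ))⁻¹ = ((d : ℂ))⁻¹ := by
    rw [map_inv₀, Complex.conj_ofReal, ← mul_inv]
    congr 1
    rw [← Complex.ofReal_mul, Real.mul_self_sqrt (by positivity)]
    norm_cast
  by_cases h0 : H j l = 0
  · have h0' : H l j = 0 := by rw [hHlj, h0]; simp
    simp [h0, h0']
  · have h0' : H l j ≠ 0 := by
      rw [hHlj]; simpa using h0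
    simp only [h0, h0', ne_eq, not_false_eq_true, if_true]
    rw [map_mul]
    have hconj : (starRingEnd ℂ) (H l j) = H j l := by
      rw [hHlj]; simp
    rw [hconj]
    have hz := hsq l j
    rw [hHlj] at hz
    simp only [Complex.conj_conj] at hz
    calc (starRingEnd ℂ) ((Real.sqrt d : ℂ))⁻¹ * (starRingEnd ℂ) (sq ((starRingEnd ℂ) (H j l)))
          * (((Real.sqrt d : ℂ))⁻¹ * sq (H j l))
        = ((starRingEnd ℂ) ((Real.sqrt d : ℂ))⁻¹ * ((Real.sqrt d : ℂ))⁻¹)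
          * (sq (H j l) * (starRingEnd ℂ) (sq ((starRingEnd ℂ) (H j l)))) := by ring
      _ = ((d : ℂ))⁻¹ * H j l := by rw [hsqrt, hz]
      _ = H j l / (d : ℂ) := by ring

end
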